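/- Let β ≠ 0 and let p ∈ ℝ[x,y] be a polynomial satisfying p(x cosh β + y sinh β, x sinh β + y cosh β) = p(x,y) for all x,y. Then there exists a polynomial q ∈ ℝ[t] with p(x,y) = q(x² − y²). -/
import Mathlib

open MvPolynomial

private lemma scale_eq (Q : MvPolynomial (Fin 2) ℝ) (a b : ℝ) :
    eval₂ C ![C a * X 0, C b * X 1] Q
      = ∑ d ∈ Q.support, monomial d ((a ^ d 0 * b ^ d 1) * coeff d Q) := by
  rw [eval₂_eq']
  refine Finset.sum_congr rfl fun d _ => ?_
  rw [monomial_eq, Fin.prod_univ_two, Finsupp.prod_pow, Fin.prod_univ_two]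
  simp only [Matrix.cons_val_zero, Matrix.cons_val_one, Matrix.head_cons,
    mul_pow, ← C_pow, map_mul]
  ring

private lemma eval_as_sum (Q : MvPolynomial (Fin 2) ℝ) (u v : ℝ) :
    eval ![u, v] Q = ∑ d ∈ Q.support, coeff d Q * (u ^ d 0 * v ^ d 1) := by
  conv_lhs => rw [as_sum Q]
  rw [map_sum]
  refine Finset.sum_congr rfl fun d _ => ?_
  rw [eval_monomial, Finsupp.prod_pow, Fin.prod_univ_two]
  simp

theorem invariants_of_hyperbolic_rotation (β : ℝ) (hβ : β ≠ 0)
    (p : MvPolynomial (Fin 2) ℝ)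
    (hinv : ∀ x y : ℝ,
      MvPolynomial.eval ![x * Real.cosh β + y * Real.sinh β,
                          x * Real.sinh β + y * Real.cosh β] p
        = MvPolynomial.eval ![x, y] p) :
    ∃ q : Polynomial ℝ, ∀ x y : ℝ,
      MvPolynomial.eval ![x, y] p = Polynomial.eval (x ^ 2 - y ^ 2) q := by
  classical
  set Q : MvPolynomial (Fin 2) ℝ :=
    eval₂ C ![C (1/2 : ℝ) * (X 0 + X 1), C (1/2 : ℝ) * (X 0 - X 1)] p with hQ
  have hQeval : ∀ u v : ℝ, eval ![u, v] Q = eval ![(u+v)/2, (u-v)/2] p := by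
    intro u v
    rw [hQ, ← eval_assoc]
    have hv : (eval ![u, v]) ∘ ![C (1/2 : ℝ) * (X 0 + X 1), C (1/2 : ℝ) * (X 0 - X 1)]
        = ![(u+v)/2, (u-v)/2] := by
      funext i; fin_cases i <;> simp [Function.comp] <;> ring
    rw [hv]
  have hpeval : ∀ x y : ℝ, eval ![x, y] p = eval ![x+y, x-y] Q := by
    intro x y
    rw [hQeval]
    have hv : (![(x+y+(x-y))/2, (x+y-(x-y))/2] : Fin 2 → ℝ) = ![x, y] := by
      funext i; fin_cases i <;> simp <;> ring
    rw [hv]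
  have hscale : ∀ u v : ℝ,
      eval ![Real.exp β * u, Real.exp (-β) * v] Q = eval ![u, v] Q := by
    intro u v
    rw [hQeval, hQeval]
    have h := hinv ((u+v)/2) ((u-v)/2)
    rw [← h]
    have e1 : Real.cosh β = (Real.exp β + Real.exp (-β))/2 := Real.cosh_eq β
    have e2 : Real.sinh β = (Real.exp β - Real.exp (-β))/2 := Real.sinh_eq β
    have hv : (![(Real.exp β * u + Real.exp (-β) * v)/2,
        (Real.exp β * u - Real.exp (-β) * v)/2] : Fin 2 → ℝ)
        = ![(u+v)/2 * Real.cosh β + (u-v)/2 * Real.sinh β,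
            (u+v)/2 * Real.sinh β + (u-v)/2 * Real.cosh β] := by
      funext i; fin_cases i <;> simp [e1, e2] <;> ring
    rw [hv]
  -- the scaled polynomial equals Q
  have hTQ : eval₂ C ![C (Real.exp β) * X 0, C (Real.exp (-β)) * X 1] Q = Q := by
    apply MvPolynomial.funext
    intro x
    rw [← eval_assoc]
    have hv : (eval x) ∘ ![C (Real.exp β) * X 0, C (Real.exp (-β)) * X 1]
        = ![Real.exp β * x 0, Real.exp (-β) * x 1] := by
      funext i; fin_cases i <;> simp [Function.comp]
    rw [hv]
    have h := hscale (x 0) (x 1)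
    have hx : (![x 0, x 1] : Fin 2 → ℝ) = x := by
      funext i; fin_cases i <;> simp
    rwa [hx] at h
  rw [scale_eq] at hTQ
  -- coefficient comparison: every monomial in the support of Q is diagonal
  have hdiag : ∀ m ∈ Q.support, m 0 = m 1 := by
    intro m hm
    have hc : coeff m (∑ d ∈ Q.support,
        monomial d ((Real.exp β ^ d 0 * Real.exp (-β) ^ d 1) * coeff d Q)) = coeff m Q := by
      rw [hTQ]
    rw [MvPolynomial.coeff_sum] at hc
    have : ∀ d ∈ Q.support,
          coeff m (monomial d ((Real.exp β ^ d 0 * Real.exp (-β) ^ d 1) * coeff d Q))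
          = if d = m then (Real.exp β ^ d 0 * Real.exp (-β) ^ d 1) * coeff d Q else 0 := by
      intro d _; rw [coeff_monomial]
    rw [Finset.sum_congr rfl this, Finset.sum_ite_eq' Q.support m, if_pos hm] at hc
    have hne : coeff m Q ≠ 0 := mem_support_iff.mp hm
    have hfac : Real.exp β ^ m 0 * Real.exp (-β) ^ m 1 = 1 := by
      by_contra hf
      exact hf (mul_right_cancel₀ hne (by rw [one_mul]; exact hc))
    rw [← Real.exp_nat_mul, ← Real.exp_nat_mul, ← Real.exp_add, Real.exp_eq_one_iff] at hfac
    have h0 : ((m 0 : ℝ) - (m 1 : ℝ)) * β = 0 := by linarith [hfac]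
    rcases mul_eq_zero.mp h0 with h | h
    · exact_mod_cast sub_eq_zero.mp h
    · exact absurd h hβ
  -- construct q
  refine ⟨∑ m ∈ Q.support, Polynomial.C (coeff m Q) * Polynomial.X ^ (m 0), fun x y => ?_⟩
  rw [hpeval, eval_as_sum]
  rw [Polynomial.eval_finset_sum]
  refine Finset.sum_congr rfl fun m hm => ?_
  rw [Polynomial.eval_mul, Polynomial.eval_C, Polynomial.eval_pow, Polynomial.eval_X]
  rw [← hdiag m hm, ← mul_pow]
  ring_nf
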